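/- Coerciveness of the modulated energy, control of the supercurrent in L². There is a universal constant C > 0 with the following property. Let n ≥ 1, ε > 0, N > 0, let u : ℝⁿ → ℂ be continuously differentiable and bounded, let v : ℝⁿ → ℝⁿ be bounded measurable, and let ψ ∈ L²(ℝⁿ). Assume |∇u − iuNv|², (1−|u|²)²/ε², and (1−|u|²)ψ are integrable on ℝⁿ. Then ∫_{ℝⁿ} |j − N v|² ≤ C ( ‖u‖²_{L^∞} + ε²N²‖v‖²_{L^∞} ) ( E_ε(u) + ε²N⁴‖ψ‖²_{L²(ℝⁿ)} ), where j := ⟨iu, ∇u⟩. -/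

import Mathlib

open MeasureTheory Complex

noncomputable section

/-- Partial derivative in the `k`-th coordinate direction. -/
def pd {n : ℕ} {E : Type*} [NormedAddCommGroup E] [NormedSpace ℝ E]
    (k : Fin n) (f : (Fin n → ℝ) → E) (x : Fin n → ℝ) : E :=
  fderiv ℝ f x (Pi.single k 1)

/-- Covariant derivative `∂_k u − iuNv_k`. -/
def covD {n : ℕ} (N : ℝ) (v : (Fin n → ℝ) → (Fin n → ℝ)) (u : (Fin n → ℝ) → ℂ)
    (k : Fin n) (x : Fin n → ℝ) : ℂ :=
  pd k u x - Complex.I * u x * Complex.ofReal (N * v x k)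

/-- Modulated Ginzburg–Landau energy. -/
def mge {n : ℕ} (ε N : ℝ) (v : (Fin n → ℝ) → (Fin n → ℝ)) (ψ : (Fin n → ℝ) → ℝ)
    (u : (Fin n → ℝ) → ℂ) : ℝ :=
  (1/2) * ∫ x, ((∑ k, ‖covD N v u k x‖^2) + (1 - ‖u x‖^2)^2 / (2*ε^2)
      + N^2 * (1 - ‖u x‖^2) * ψ x)

/-- Real inner product on `ℂ`: `⟨x, y⟩ = Re(x̄ · y)`. -/
def rinner (x y : ℂ) : ℝ := (starRingEnd ℂ x * y).re

/-- Supercurrent `j := ⟨iu, ∇u⟩`. -/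
def scur {n : ℕ} (u : (Fin n → ℝ) → ℂ) (k : Fin n) (x : Fin n → ℝ) : ℝ :=
  rinner (Complex.I * u x) (pd k u x)

set_option maxHeartbeats 1000000 in
/-- coerciveness of the modulated energy, control of the supercurrent in
`L²`: there is a universal constant `C > 0` such that
`∫|j − Nv|² ≤ C(‖u‖²_{L^∞} + ε²N²‖v‖²_{L^∞})(E_ε(u) + ε²N⁴‖ψ‖²_{L²})`. -/
theorem supercurrent_L2_control :
    ∃ C : ℝ, 0 < C ∧
      ∀ (n : ℕ), 1 ≤ n →
      ∀ (ε N : ℝ), 0 < ε → 0 < N →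
      ∀ (u : (Fin n → ℝ) → ℂ), ContDiff ℝ 1 u →
      ∀ (v : (Fin n → ℝ) → (Fin n → ℝ)), Measurable v →
      ∀ (ψ : (Fin n → ℝ) → ℝ), MemLp ψ 2 volume →
      ∀ (Mu Mv : ℝ), 0 ≤ Mu → 0 ≤ Mv →
      (∀ x, ‖u x‖ ≤ Mu) →
      (∀ x, Real.sqrt (∑ k, (v x k)^2) ≤ Mv) →
      Integrable (fun x => ∑ k, ‖covD N v u k x‖^2) →
      Integrable (fun x => (1 - ‖u x‖^2)^2 / ε^2) →
      Integrable (fun x => (1 - ‖u x‖^2) * ψ x) →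
      (∫ x, ∑ k, (scur u k x - N * v x k)^2)
        ≤ C * (Mu^2 + ε^2 * N^2 * Mv^2) *
            (mge ε N v ψ u + ε^2 * N^4 * (∫ x, (ψ x)^2)) := by
  refine ⟨16, by norm_num, ?_⟩
  intro n hn ε N hε hN u hu v hv ψ hψ Mu Mv hMu hMv hu_bd hv_bd hIA hIB hIψ
  have hε' : ε ≠ 0 := ne_of_gt hε
  have hψsq : Integrable (fun x => (ψ x)^2) := hψ.integrable_sq
  have hP0 : 0 ≤ ∫ x, (ψ x)^2 := integral_nonneg fun x => sq_nonneg _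
  have hA0 : 0 ≤ ∫ x, ∑ k, ‖covD N v u k x‖^2 :=
    integral_nonneg fun x => Finset.sum_nonneg fun k _ => sq_nonneg _
  have hB0 : 0 ≤ ∫ x, (1 - ‖u x‖^2)^2 / ε^2 :=
    integral_nonneg fun x => div_nonneg (sq_nonneg _) (sq_nonneg _)
  -- decompose the energy
  have hmge : mge ε N v ψ u = (1/2) * ((∫ x, ∑ k, ‖covD N v u k x‖^2)
      + (1/2) * (∫ x, (1 - ‖u x‖^2)^2 / ε^2) + N^2 * ∫ x, (1 - ‖u x‖^2) * ψ x) := by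
    rw [mge]
    congr 1
    rw [show (fun x => ((∑ k, ‖covD N v u k x‖^2) + (1 - ‖u x‖^2)^2 / (2*ε^2)
        + N^2 * (1 - ‖u x‖^2) * ψ x))
      = fun x => (∑ k, ‖covD N v u k x‖^2)
        + (((1 - ‖u x‖^2)^2 / ε^2) / 2 + N^2 * ((1 - ‖u x‖^2) * ψ x)) by
        funext x; field_simp; ring]
    have hI2 : Integrable (fun x => (1 - ‖u x‖^2)^2 / ε^2 / 2 + N^2 * ((1 - ‖u x‖^2) * ψ x)) volume :=
      (hIB.div_const 2).add (hIψ.const_mul _)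
    rw [integral_add hIA hI2, integral_add (hIB.div_const 2) (hIψ.const_mul _), integral_div,
        integral_const_mul]
    ring
  -- AM-GM bound on the ψ term
  have hAM : -((∫ x, (1 - ‖u x‖^2)^2 / ε^2)/4) - ε^2*N^4*(∫ x, (ψ x)^2)
      ≤ N^2 * ∫ x, (1 - ‖u x‖^2) * ψ x := by
    have hle : ∫ x, (-(((1 - ‖u x‖^2)^2 / ε^2)/4) - ε^2*N^4*(ψ x)^2)
        ≤ ∫ x, N^2 * ((1 - ‖u x‖^2) * ψ x) := by
      refine integral_mono ((hIB.div_const 4).neg.sub (hψsq.const_mul _))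
        (hIψ.const_mul _) fun x => ?_
      have key : (1 - ‖u x‖^2)^2/ε^2/4 + ε^2*N^4*(ψ x)^2 + N^2*((1 - ‖u x‖^2)*ψ x)
          = ((1 - ‖u x‖^2)/(2*ε) + ε*N^2*ψ x)^2 := by
        field_simp; ring
      nlinarith [sq_nonneg ((1 - ‖u x‖^2)/(2*ε) + ε*N^2*ψ x)]
    have hI3 : Integrable (fun x => -((1 - ‖u x‖^2)^2/ε^2/4)) volume := (hIB.div_const 4).neg
    rw [integral_sub hI3 (hψsq.const_mul _), integral_neg, integral_div, integral_const_mul,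
        integral_const_mul] at hle
    linarith
  -- pointwise bound on the supercurrent
  have hpt : ∀ x, (∑ k, (scur u k x - N * v x k)^2)
      ≤ 2*Mu^2 * (∑ k, ‖covD N v u k x‖^2)
        + 2*ε^2*N^2*Mv^2 * ((1 - ‖u x‖^2)^2 / ε^2) := by
    intro x
    have hvsum : ∑ k, (v x k)^2 ≤ Mv^2 := by
      have h0 : 0 ≤ ∑ k, (v x k)^2 := Finset.sum_nonneg fun k _ => sq_nonneg _
      nlinarith [hv_bd x, Real.sq_sqrt h0, Real.sqrt_nonneg (∑ k, (v x k)^2)]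
    have hk : ∀ k, (scur u k x - N * v x k)^2
        ≤ 2*Mu^2*‖covD N v u k x‖^2 + 2*N^2*(1 - ‖u x‖^2)^2*(v x k)^2 := by
      intro k
      have hid : scur u k x - N * v x k
          = rinner (Complex.I * u x) (covD N v u k x) - (N * v x k) * (1 - ‖u x‖^2) := by
        simp only [scur, covD, rinner, pd, Complex.mul_re, Complex.mul_im, Complex.sub_re,
          Complex.sub_im, Complex.I_re, Complex.I_im, Complex.ofReal_re, Complex.ofReal_im,
          Complex.conj_re, Complex.conj_im, Complex.sq_norm,
          Complex.normSq_apply]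
        ring
      have hCS : |rinner (Complex.I * u x) (covD N v u k x)| ≤ Mu * ‖covD N v u k x‖ := by
        calc |rinner (Complex.I * u x) (covD N v u k x)|
            ≤ ‖starRingEnd ℂ (Complex.I * u x) * covD N v u k x‖ :=
              Complex.abs_re_le_norm _
          _ = ‖u x‖ * ‖covD N v u k x‖ := by
              simp [map_mul]
          _ ≤ Mu * ‖covD N v u k x‖ :=
              mul_le_mul_of_nonneg_right (hu_bd x) (norm_nonneg _)
      rw [hid]
      nlinarith [hCS, abs_nonneg (rinner (Complex.I * u x) (covD N v u k x)),
        norm_nonneg (covD N v u k x), mul_nonneg hMu (norm_nonneg (covD N v u k x)),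
        sq_nonneg (rinner (Complex.I * u x) (covD N v u k x) + (N * v x k) * (1 - ‖u x‖^2)),
        _root_.sq_abs (rinner (Complex.I * u x) (covD N v u k x))]
    calc (∑ k, (scur u k x - N * v x k)^2)
        ≤ ∑ k, (2*Mu^2*‖covD N v u k x‖^2 + 2*N^2*(1 - ‖u x‖^2)^2*(v x k)^2) :=
          Finset.sum_le_sum fun k _ => hk k
      _ = 2*Mu^2 * (∑ k, ‖covD N v u k x‖^2)
          + 2*N^2*(1 - ‖u x‖^2)^2 * (∑ k, (v x k)^2) := by
          rw [Finset.sum_add_distrib, Finset.mul_sum, Finset.mul_sum]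
      _ ≤ 2*Mu^2 * (∑ k, ‖covD N v u k x‖^2) + 2*N^2*(1 - ‖u x‖^2)^2 * Mv^2 := by
          have : (0:ℝ) ≤ 2*N^2*(1 - ‖u x‖^2)^2 := by positivity
          nlinarith [mul_le_mul_of_nonneg_left hvsum this]
      _ = 2*Mu^2 * (∑ k, ‖covD N v u k x‖^2)
          + 2*ε^2*N^2*Mv^2 * ((1 - ‖u x‖^2)^2 / ε^2) := by
          field_simp
  -- measurability of the LHS integrand
  have hfm : Measurable fun x => ∑ k, (scur u k x - N * v x k)^2 := by
    refine Finset.measurable_sum _ fun k _ => ?_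
    have hsc : Continuous fun x => scur u k x := by
      have h1 : Continuous fun x => pd k u x :=
        (hu.continuous_fderiv one_ne_zero).clm_apply continuous_const
      exact Complex.continuous_re.comp
        (((Complex.continuous_conj).comp (continuous_const.mul hu.continuous)).mul h1)
    exact ((hsc.measurable.sub (((measurable_pi_apply k).comp hv).const_mul N)).pow_const 2)
  -- integrability of the dominating function and integral bound
  have hg_int : Integrable (fun x => 2*Mu^2 * (∑ k, ‖covD N v u k x‖^2)
      + 2*ε^2*N^2*Mv^2 * ((1 - ‖u x‖^2)^2 / ε^2)) :=
    (hIA.const_mul _).add (hIB.const_mul _)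
  have hf_int : Integrable (fun x => ∑ k, (scur u k x - N * v x k)^2) := by
    refine hg_int.mono' hfm.aestronglyMeasurable (ae_of_all _ fun x => ?_)
    rw [Real.norm_of_nonneg (Finset.sum_nonneg fun k _ => sq_nonneg _)]
    exact hpt x
  have hmain : (∫ x, ∑ k, (scur u k x - N * v x k)^2)
      ≤ 2*Mu^2 * (∫ x, ∑ k, ‖covD N v u k x‖^2)
        + 2*ε^2*N^2*Mv^2 * (∫ x, (1 - ‖u x‖^2)^2 / ε^2) := by
    calc (∫ x, ∑ k, (scur u k x - N * v x k)^2)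
        ≤ ∫ x, (2*Mu^2 * (∑ k, ‖covD N v u k x‖^2)
            + 2*ε^2*N^2*Mv^2 * ((1 - ‖u x‖^2)^2 / ε^2)) :=
          integral_mono hf_int hg_int hpt
      _ = _ := by
          rw [integral_add (hIA.const_mul _) (hIB.const_mul _), integral_const_mul,
            integral_const_mul]
  -- combine
  set IA := ∫ x, ∑ k, ‖covD N v u k x‖^2
  set IB := ∫ x, (1 - ‖u x‖^2)^2 / ε^2
  set P := ∫ x, (ψ x)^2
  set S := mge ε N v ψ u + ε^2 * N^4 * P with hS_def
  clear_value IA IB P S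
  have hP0' : (0:ℝ) ≤ ε^2*N^4*P := mul_nonneg (by positivity) hP0
  have hS0 : 0 ≤ S := by rw [hS_def, hmge]; linarith only [hA0, hB0, hP0', hAM]
  have h2 : IA ≤ 2*S := by rw [hS_def, hmge]; linarith only [hA0, hB0, hP0', hAM]
  have h3 : IB ≤ 8*S := by rw [hS_def, hmge]; linarith only [hA0, hB0, hP0', hAM]
  have c1 : (0:ℝ) ≤ 2*Mu^2 := by positivity
  have c2 : (0:ℝ) ≤ 2*ε^2*N^2*Mv^2 := by positivity
  have e1 := mul_le_mul_of_nonneg_left h2 c1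
  have e2 := mul_le_mul_of_nonneg_left h3 c2
  have e3 : 0 ≤ Mu^2*S := mul_nonneg (sq_nonneg Mu) hS0
  have e4 : 0 ≤ ε^2*N^2*Mv^2*S := mul_nonneg (by positivity) hS0
  linarith only [e1, e2, e3, e4, hmain]
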